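/- Any 3-consistent colored set of lines L = L_1 ∪ L_2 ∪ L_3 ∪ L_4 in R^d with |L_1| = |L_2| = |L_3| = |L_4| = 2 contains a colorful incidence. -/
import Mathlib

/-- A line in ℝ^d, seen as a set of points. -/
def IsLine {d : ℕ} (L : Set (Fin d → ℝ)) : Prop :=
  ∃ a v : Fin d → ℝ, v ≠ 0 ∧ L = {x | ∃ t : ℝ, x = a + t • v}

/-- A 4-colored set of lines is 3-consistent if for every 3 colors S and every line of a
color in S, the line passes through a point incident to lines of all colors in S. -/
def Consistent3 {d : ℕ} (L : Fin 4 → Set (Set (Fin d → ℝ))) : Prop :=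
  ∀ S : Finset (Fin 4), S.card = 3 → ∀ i ∈ S, ∀ ℓ ∈ L i,
    ∃ p ∈ ℓ, ∀ j ∈ S, ∃ ℓ' ∈ L j, p ∈ ℓ'

/-- The line through two points. -/
def lineThrough {d : ℕ} (p q : Fin d → ℝ) : Set (Fin d → ℝ) :=
  {x | ∃ t : ℝ, x = p + t • (q - p)}

lemma line_eq_of_two_mem {d : ℕ} {ℓ : Set (Fin d → ℝ)} (hl : IsLine ℓ)
    {p q : Fin d → ℝ} (hp : p ∈ ℓ) (hq : q ∈ ℓ) (hpq : p ≠ q) :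
    ℓ = lineThrough p q := by
  obtain ⟨a, w, hw, rfl⟩ := hl
  obtain ⟨t₁, rfl⟩ := hp
  obtain ⟨t₂, rfl⟩ := hq
  have ht : t₂ - t₁ ≠ 0 := by
    intro h
    apply hpq
    have : t₂ = t₁ := by linarith [sub_eq_zero.mp h]
    rw [this]
  ext x
  simp only [Set.mem_setOf_eq, lineThrough]
  constructor
  · rintro ⟨t, rfl⟩
    refine ⟨(t - t₁) / (t₂ - t₁), ?_⟩
    have : (a + t₂ • w) - (a + t₁ • w) = (t₂ - t₁) • w := by
      rw [sub_smul]; abel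
    rw [this, smul_smul, div_mul_cancel₀ _ ht]
    rw [sub_smul]; abel
  · rintro ⟨t, rfl⟩
    refine ⟨t₁ + t * (t₂ - t₁), ?_⟩
    have : (a + t₂ • w) - (a + t₁ • w) = (t₂ - t₁) • w := by
      rw [sub_smul]; abel
    rw [this, smul_smul, add_smul]
    abel

/-- Coordinates with respect to an affine frame `P`, `Q`, `Y` are unique. -/
lemma indep_coords {d : ℕ} {P Q Y : Fin d → ℝ} (hPQ : P ≠ Q)
    (hY : Y ∉ lineThrough P Q) {α β α' β' : ℝ}
    (h : P + α • (Q - P) + β • (Y - P) = P + α' • (Q - P) + β' • (Y - P)) :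
    α = α' ∧ β = β' := by
  set u := Q - P with hu
  set v := Y - P with hv
  have hu0 : u ≠ 0 := sub_ne_zero.mpr (Ne.symm hPQ)
  have h0 : (α - α') • u + (β - β') • v = 0 := by
    have : (α - α') • u + (β - β') • v =
        (P + α • u + β • v) - (P + α' • u + β' • v) := by
      rw [sub_smul, sub_smul]; abel
    rw [this, h, sub_self]
  by_cases hβ : β = β'
  · subst hβ
    have : (α - α') • u = 0 := by
      have := h0
      rwa [sub_self, zero_smul, add_zero] at this
    rcases smul_eq_zero.mp this with h' | h'
    · exact ⟨by linarith [sub_eq_zero.mp (by linarith [h'] : α - α' = (0:ℝ))], rfl⟩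
    · exact absurd h' hu0
  · exfalso
    apply hY
    have hββ : β - β' ≠ 0 := sub_ne_zero.mpr hβ
    have hvu : v = ((β - β')⁻¹ * (α' - α)) • u := by
      have : (β - β') • v = (α' - α) • u := by
        have h1 : (α - α') • u = -((β - β') • v) := add_eq_zero_iff_eq_neg.mp h0
        have h2 : (β - β') • v = -((α - α') • u) := by rw [h1]; abel
        rw [h2, ← neg_smul]
        congr 1
        ring
      calc v = (β - β')⁻¹ • ((β - β') • v) := by rw [inv_smul_smul₀ hββ]
        _ = (β - β')⁻¹ • ((α' - α) • u) := by rw [this]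
        _ = ((β - β')⁻¹ * (α' - α)) • u := by rw [smul_smul]
    refine ⟨(β - β')⁻¹ * (α' - α), ?_⟩
    have hYv : Y = P + v := by rw [hv]; abel
    rw [hYv, hvu, hu]

/-- A point lies on some line of color `j`. -/
def OnCol {d : ℕ} (L : Fin 4 → Set (Set (Fin d → ℝ))) (j : Fin 4) (p : Fin d → ℝ) : Prop :=
  ∃ ℓ ∈ L j, p ∈ ℓ

/-- Key extraction: on every line of color `i` there is a point seeing colors
`i`, `j`, `k` but not the fourth color `m`. -/
lemma key {d : ℕ} (L : Fin 4 → Set (Set (Fin d → ℝ))) (hcons : Consistent3 L)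
    (hno : ∀ p : Fin d → ℝ, ∃ j, ¬ OnCol L j p) (i j k m : Fin 4)
    (hij : i ≠ j) (hik : i ≠ k) (hjk : j ≠ k)
    (hcov : ∀ x : Fin 4, x = i ∨ x = j ∨ x = k ∨ x = m)
    {ℓ : Set (Fin d → ℝ)} (hl : ℓ ∈ L i) :
    ∃ p ∈ ℓ, OnCol L i p ∧ OnCol L j p ∧ OnCol L k p ∧ ¬ OnCol L m p := by
  have hcard3 : ({i, j, k} : Finset (Fin 4)).card = 3 := by
    rw [Finset.card_insert_of_notMem (by simp [hij, hik]),
      Finset.card_insert_of_notMem (by simp [hjk]), Finset.card_singleton]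
  obtain ⟨p, hp, hall⟩ := hcons {i, j, k} hcard3 i (by simp) ℓ hl
  have hi : OnCol L i p := hall i (by simp)
  have hj : OnCol L j p := hall j (by simp)
  have hk : OnCol L k p := hall k (by simp)
  refine ⟨p, hp, hi, hj, hk, ?_⟩
  obtain ⟨j', hj'⟩ := hno p
  rcases hcov j' with rfl | rfl | rfl | rfl
  · exact absurd hi hj'
  · exact absurd hj hj'
  · exact absurd hk hj'
  · exact hj'

/-- Lines of different colors are distinct sets. -/
lemma cross {d : ℕ} (L : Fin 4 → Set (Set (Fin d → ℝ))) (hcons : Consistent3 L)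
    (hno : ∀ p : Fin d → ℝ, ∃ j, ¬ OnCol L j p) (i j k m : Fin 4)
    (hik : i ≠ k) (him : i ≠ m) (hkm : k ≠ m)
    (hcov : ∀ x : Fin 4, x = i ∨ x = k ∨ x = m ∨ x = j)
    {ℓ ℓ' : Set (Fin d → ℝ)} (hi : ℓ ∈ L i) (hj : ℓ' ∈ L j) : ℓ ≠ ℓ' := by
  intro h
  obtain ⟨p, hp, _, _, _, hnot⟩ := key L hcons hno i k m j hik him hkm hcov hi
  exact hnot ⟨ℓ', hj, h ▸ hp⟩

/-- Two lines of different colors meet in at most one point. -/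
lemma umeet {d : ℕ} (L : Fin 4 → Set (Set (Fin d → ℝ)))
    (hline : ∀ i, ∀ ℓ ∈ L i, IsLine ℓ) (hcons : Consistent3 L)
    (hno : ∀ p : Fin d → ℝ, ∃ j, ¬ OnCol L j p) (i j k m : Fin 4)
    (hik : i ≠ k) (him : i ≠ m) (hkm : k ≠ m)
    (hcov : ∀ x : Fin 4, x = i ∨ x = k ∨ x = m ∨ x = j)
    {ℓ ℓ' : Set (Fin d → ℝ)} (hi : ℓ ∈ L i) (hj : ℓ' ∈ L j)
    {p q : Fin d → ℝ} (hp : p ∈ ℓ) (hp' : p ∈ ℓ') (hq : q ∈ ℓ) (hq' : q ∈ ℓ') :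
    p = q := by
  by_contra hpq
  have h1 := line_eq_of_two_mem (hline i ℓ hi) hp hq hpq
  have h2 := line_eq_of_two_mem (hline j ℓ' hj) hp' hq' hpq
  exact cross L hcons hno i j k m hik him hkm hcov hi hj (h1.trans h2.symm)

/-- Membership in a two-element color class. -/
lemma mem_pair_of {d : ℕ} {S : Set (Set (Fin d → ℝ))} {A B x y : Set (Fin d → ℝ)}
    (hS : S = {A, B}) (hx : x ∈ S) (hy : y ∈ S) (hxy : x ≠ y) :
    ∀ z ∈ S, z = x ∨ z = y := by
  subst hS
  have hx' : x = A ∨ x = B := by simpa using hx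
  have hy' : y = A ∨ y = B := by simpa using hy
  intro z hz
  have hz' : z = A ∨ z = B := by simpa using hz
  rcases hx' with rfl | rfl <;> rcases hy' with rfl | rfl <;>
    rcases hz' with rfl | rfl <;> simp_all

set_option maxHeartbeats 2000000 in
/-- Any 3-consistent colored set of lines with 4 color classes of size 2
in ℝ^d contains a colorful incidence. -/
theorem stmt3 {d : ℕ} (L : Fin 4 → Set (Set (Fin d → ℝ)))
    (hline : ∀ i, ∀ ℓ ∈ L i, IsLine ℓ)
    (hcard : ∀ i, (L i).ncard = 2)
    (hcons : Consistent3 L) :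
    ∃ p : Fin d → ℝ, ∀ j, ∃ ℓ ∈ L j, p ∈ ℓ := by
  by_contra hcol
  push_neg at hcol
  have hno : ∀ p : Fin d → ℝ, ∃ j, ¬ OnCol L j p := by
    intro p
    obtain ⟨j, hj⟩ := hcol p
    exact ⟨j, by rintro ⟨ℓ, hℓ, hp⟩; exact hj ℓ hℓ hp⟩
  -- convenient instantiations
  have K : ∀ (i j k m : Fin 4),
      (i ≠ j ∧ i ≠ k ∧ j ≠ k ∧ ∀ x : Fin 4, x = i ∨ x = j ∨ x = k ∨ x = m) →
      ∀ {ℓ : Set (Fin d → ℝ)}, ℓ ∈ L i →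
      ∃ p ∈ ℓ, OnCol L i p ∧ OnCol L j p ∧ OnCol L k p ∧ ¬ OnCol L m p :=
    fun i j k m ⟨h1, h2, h3, h4⟩ _ hl => key L hcons hno i j k m h1 h2 h3 h4 hl
  have UM : ∀ (i j k m : Fin 4),
      (i ≠ k ∧ i ≠ m ∧ k ≠ m ∧ ∀ x : Fin 4, x = i ∨ x = k ∨ x = m ∨ x = j) →
      ∀ {ℓ ℓ' : Set (Fin d → ℝ)}, ℓ ∈ L i → ℓ' ∈ L j →
      ∀ {p q : Fin d → ℝ}, p ∈ ℓ → p ∈ ℓ' → q ∈ ℓ → q ∈ ℓ' → p = q :=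
    fun i j k m ⟨h1, h2, h3, h4⟩ _ _ hi hj _ _ hp hp' hq hq' =>
      umeet L hline hcons hno i j k m h1 h2 h3 h4 hi hj hp hp' hq hq'
  -- the two lines of color 0
  obtain ⟨a0, b0, hab0, hL0⟩ := Set.ncard_eq_two.mp (hcard 0)
  obtain ⟨A1, B1, hAB1, hL1⟩ := Set.ncard_eq_two.mp (hcard 1)
  obtain ⟨A2, B2, hAB2, hL2⟩ := Set.ncard_eq_two.mp (hcard 2)
  obtain ⟨A3, B3, hAB3, hL3⟩ := Set.ncard_eq_two.mp (hcard 3)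
  have ha0 : a0 ∈ L 0 := by rw [hL0]; exact Set.mem_insert _ _
  have hb0 : b0 ∈ L 0 := by rw [hL0]; exact Set.mem_insert_of_mem _ rfl
  -- the three typed points on a0
  obtain ⟨P, hPa0, -, hP1, hP2, hP3n⟩ := K 0 1 2 3 (by decide) ha0
  obtain ⟨Q, hQa0, -, hQ1, hQ3, hQ2n⟩ := K 0 1 3 2 (by decide) ha0
  obtain ⟨R, hRa0, -, hR2, hR3, hR1n⟩ := K 0 2 3 1 (by decide) ha0
  obtain ⟨a1, ha1, hPa1⟩ := hP1
  obtain ⟨a2, ha2, hPa2⟩ := hP2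
  obtain ⟨b1, hb1, hQb1⟩ := hQ1
  obtain ⟨a3, ha3, hQa3⟩ := hQ3
  obtain ⟨b2, hb2, hRb2⟩ := hR2
  obtain ⟨b3, hb3, hRb3⟩ := hR3
  -- distinctness of the three points
  have hPQ : P ≠ Q := fun h => hP3n (show OnCol L 3 P by rw [h]; exact ⟨a3, ha3, hQa3⟩)
  have hPR : P ≠ R := fun h => hP3n (show OnCol L 3 P by rw [h]; exact ⟨b3, hb3, hRb3⟩)
  have hQR : Q ≠ R := fun h => hQ2n (show OnCol L 2 Q by rw [h]; exact ⟨b2, hb2, hRb2⟩)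
  -- the lines of each color are distinct
  have hab1 : a1 ≠ b1 := by
    intro h
    exact hPQ (UM 1 0 2 3 (by decide) ha1 ha0 hPa1 hPa0
      (show Q ∈ a1 by rw [h]; exact hQb1) hQa0)
  have hab2 : a2 ≠ b2 := by
    intro h
    exact hPR (UM 2 0 1 3 (by decide) ha2 ha0 hPa2 hPa0
      (show R ∈ a2 by rw [h]; exact hRb2) hRa0)
  have hab3 : a3 ≠ b3 := by
    intro h
    exact hQR (UM 3 0 1 2 (by decide) ha3 ha0 hQa3 hQa0
      (show R ∈ a3 by rw [h]; exact hRb3) hRa0)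
  have hmem1 : ∀ z ∈ L 1, z = a1 ∨ z = b1 := mem_pair_of hL1 ha1 hb1 hab1
  have hmem2 : ∀ z ∈ L 2, z = a2 ∨ z = b2 := mem_pair_of hL2 ha2 hb2 hab2
  have hmem3 : ∀ z ∈ L 3, z = a3 ∨ z = b3 := mem_pair_of hL3 ha3 hb3 hab3
  have hmem0 : ∀ z ∈ L 0, z = a0 ∨ z = b0 := mem_pair_of hL0 ha0 hb0 hab0
  -- the point Y on b1 (type {0,1,2})
  obtain ⟨Y, hYb1, -, hY0, hY2, hY3n⟩ := K 1 0 2 3 (by decide) hb1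
  obtain ⟨ℓY, hℓY, hYℓ⟩ := hY0
  have hYb0 : Y ∈ b0 := by
    rcases hmem0 ℓY hℓY with rfl | rfl
    · exfalso
      have hYQ : Y = Q := UM 0 1 2 3 (by decide) hℓY hb1 hYℓ hYb1 hQa0 hQb1
      exact hQ2n (show OnCol L 2 Q by rw [← hYQ]; exact hY2)
    · exact hYℓ
  -- the point U on b1 (type {1,2,3})
  obtain ⟨U, hUb1, -, hU2, hU3, hU0n⟩ := K 1 2 3 0 (by decide) hb1
  obtain ⟨ℓU3, hℓU3, hUℓ3⟩ := hU3
  have hUb3 : U ∈ b3 := by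
    rcases hmem3 ℓU3 hℓU3 with rfl | rfl
    · exfalso
      have hUQ : U = Q := UM 3 1 0 2 (by decide) hℓU3 hb1 hUℓ3 hUb1 hQa3 hQb1
      exact hU0n (show OnCol L 0 U by rw [hUQ]; exact ⟨a0, ha0, hQa0⟩)
    · exact hUℓ3
  -- the point Y' on b2 (type {0,1,2})
  obtain ⟨Y', hY'b2, -, hY'0, hY'1, hY'3n⟩ := K 2 0 1 3 (by decide) hb2
  obtain ⟨ℓY', hℓY', hY'ℓ⟩ := hY'0
  have hY'b0 : Y' ∈ b0 := by
    rcases hmem0 ℓY' hℓY' with rfl | rfl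
    · exfalso
      have hY'R : Y' = R := UM 0 2 1 3 (by decide) hℓY' hb2 hY'ℓ hY'b2 hRa0 hRb2
      exact hY'3n (show OnCol L 3 Y' by rw [hY'R]; exact ⟨b3, hb3, hRb3⟩)
    · exact hY'ℓ
  -- the point W on b3 (type {0,1,3})
  obtain ⟨W, hWb3, -, hW0, hW1, hW2n⟩ := K 3 0 1 2 (by decide) hb3
  obtain ⟨ℓW0, hℓW0, hWℓ0⟩ := hW0
  have hWb0 : W ∈ b0 := by
    rcases hmem0 ℓW0 hℓW0 with rfl | rfl
    · exfalso
      have hWR : W = R := UM 0 3 1 2 (by decide) hℓW0 hb3 hWℓ0 hWb3 hRa0 hRb3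
      exact hW2n (show OnCol L 2 W by rw [hWR]; exact ⟨b2, hb2, hRb2⟩)
    · exact hWℓ0
  obtain ⟨ℓW1, hℓW1, hWℓ1⟩ := hW1
  have hWa1 : W ∈ a1 := by
    rcases hmem1 ℓW1 hℓW1 with rfl | rfl
    · exact hWℓ1
    · exfalso
      have hWU : W = U := UM 1 3 0 2 (by decide) hℓW1 hb3 hWℓ1 hWb3 hUb1 hUb3
      exact hW2n (show OnCol L 2 W by rw [hWU]; exact hU2)
  -- merge: Y' = Y, so Y ∈ b2
  obtain ⟨ℓY'1, hℓY'1, hY'ℓ1⟩ := hY'1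
  have hYY' : Y' = Y := by
    rcases hmem1 ℓY'1 hℓY'1 with rfl | rfl
    · exfalso
      have hY'W : Y' = W := UM 1 0 2 3 (by decide) hℓY'1 hb0 hY'ℓ1 hY'b0 hWa1 hWb0
      exact hW2n (show OnCol L 2 W by rw [← hY'W]; exact ⟨b2, hb2, hY'b2⟩)
    · exact UM 1 0 2 3 (by decide) hℓY'1 hb0 hY'ℓ1 hY'b0 hYb1 hYb0
  have hYb2 : Y ∈ b2 := by rw [← hYY']; exact hY'b2
  -- resolve U ∈ a2
  obtain ⟨ℓU2, hℓU2, hUℓ2⟩ := hU2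
  have hUa2 : U ∈ a2 := by
    rcases hmem2 ℓU2 hℓU2 with rfl | rfl
    · exact hUℓ2
    · exfalso
      have hUY : U = Y := UM 2 1 0 3 (by decide) hℓU2 hb1 hUℓ2 hUb1 hYb2 hYb1
      exact hY3n (show OnCol L 3 Y by rw [← hUY]; exact ⟨b3, hb3, hUb3⟩)
  -- the point X on a3 (type {0,2,3})
  obtain ⟨X, hXa3, -, hX0, hX2, hX1n⟩ := K 3 0 2 1 (by decide) ha3
  obtain ⟨ℓX0, hℓX0, hXℓ0⟩ := hX0
  have hXb0 : X ∈ b0 := by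
    rcases hmem0 ℓX0 hℓX0 with rfl | rfl
    · exfalso
      have hXQ : X = Q := UM 0 3 1 2 (by decide) hℓX0 ha3 hXℓ0 hXa3 hQa0 hQa3
      exact hX1n (show OnCol L 1 X by rw [hXQ]; exact ⟨b1, hb1, hQb1⟩)
    · exact hXℓ0
  obtain ⟨ℓX2, hℓX2, hXℓ2⟩ := hX2
  have hXa2 : X ∈ a2 := by
    rcases hmem2 ℓX2 hℓX2 with rfl | rfl
    · exact hXℓ2
    · exfalso
      have hXY : X = Y := UM 2 0 1 3 (by decide) hℓX2 hb0 hXℓ2 hXb0 hYb2 hYb0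
      exact hX1n (show OnCol L 1 X by rw [hXY]; exact ⟨b1, hb1, hYb1⟩)
  -- the point V on a3 (type {1,2,3})
  obtain ⟨V, hVa3, -, hV1, hV2, hV0n⟩ := K 3 1 2 0 (by decide) ha3
  obtain ⟨ℓV2, hℓV2, hVℓ2⟩ := hV2
  have hVb2 : V ∈ b2 := by
    rcases hmem2 ℓV2 hℓV2 with rfl | rfl
    · exfalso
      have hVX : V = X := UM 2 3 0 1 (by decide) hℓV2 ha3 hVℓ2 hVa3 hXa2 hXa3
      exact hV0n (show OnCol L 0 V by rw [hVX]; exact ⟨b0, hb0, hXb0⟩)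
    · exact hVℓ2
  obtain ⟨ℓV1, hℓV1, hVℓ1⟩ := hV1
  have hVa1 : V ∈ a1 := by
    rcases hmem1 ℓV1 hℓV1 with rfl | rfl
    · exact hVℓ1
    · exfalso
      have hVQ : V = Q := UM 1 3 0 2 (by decide) hℓV1 ha3 hVℓ1 hVa3 hQb1 hQa3
      exact hV0n (show OnCol L 0 V by rw [hVQ]; exact ⟨a0, ha0, hQa0⟩)
  -- extra point distinctness
  have hQY : Q ≠ Y := fun h => hY3n (show OnCol L 3 Y by rw [← h]; exact ⟨a3, ha3, hQa3⟩)
  have hRY : R ≠ Y := fun h => hY3n (show OnCol L 3 Y by rw [← h]; exact ⟨b3, hb3, hRb3⟩)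
  have hPV : P ≠ V := fun h => hV0n (show OnCol L 0 V by rw [← h]; exact ⟨a0, ha0, hPa0⟩)
  have hPU : P ≠ U := fun h => hU0n (show OnCol L 0 U by rw [← h]; exact ⟨a0, ha0, hPa0⟩)
  have hYW : Y ≠ W := fun h => hW2n (show OnCol L 2 W by rw [← h]; exact ⟨b2, hb2, hYb2⟩)
  have hQX : Q ≠ X := fun h => hX1n (show OnCol L 1 X by rw [← h]; exact ⟨b1, hb1, hQb1⟩)
  have hRW : R ≠ W := fun h => hW2n (show OnCol L 2 W by rw [← h]; exact ⟨b2, hb2, hRb2⟩)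
  have hVR : V ≠ R := fun h => hV0n (show OnCol L 0 V by rw [h]; exact ⟨a0, ha0, hRa0⟩)
  have hVY : V ≠ Y := fun h => hV0n (show OnCol L 0 V by rw [h]; exact ⟨b0, hb0, hYb0⟩)
  have hYa0 : Y ∉ a0 := by
    intro hYa0'
    have hYQ : Y = Q := UM 0 1 2 3 (by decide) ha0 hb1 hYa0' hYb1 hQa0 hQb1
    exact hY3n (show OnCol L 3 Y by rw [hYQ]; exact ⟨a3, ha3, hQa3⟩)
  -- line representations
  have ha0eq : a0 = lineThrough P Q := line_eq_of_two_mem (hline 0 a0 ha0) hPa0 hQa0 hPQ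
  have hb1eq : b1 = lineThrough Q Y := line_eq_of_two_mem (hline 1 b1 hb1) hQb1 hYb1 hQY
  have hb2eq : b2 = lineThrough R Y := line_eq_of_two_mem (hline 2 b2 hb2) hRb2 hYb2 hRY
  have ha1eq : a1 = lineThrough P V := line_eq_of_two_mem (hline 1 a1 ha1) hPa1 hVa1 hPV
  have ha2eq : a2 = lineThrough P U := line_eq_of_two_mem (hline 2 a2 ha2) hPa2 hUa2 hPU
  have hb0eq : b0 = lineThrough Y W := line_eq_of_two_mem (hline 0 b0 hb0) hYb0 hWb0 hYW
  have ha3eq : a3 = lineThrough Q X := line_eq_of_two_mem (hline 3 a3 ha3) hQa3 hXa3 hQX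
  have hb3eq : b3 = lineThrough R W := line_eq_of_two_mem (hline 3 b3 hb3) hRb3 hWb3 hRW
  -- coordinates
  obtain ⟨r, hr⟩ : ∃ τ : ℝ, R = P + τ • (Q - P) := by
    have := ha0eq ▸ hRa0; exact this
  obtain ⟨t, ht⟩ : ∃ τ : ℝ, U = Q + τ • (Y - Q) := by
    have := hb1eq ▸ hUb1; exact this
  obtain ⟨s, hs⟩ : ∃ τ : ℝ, V = R + τ • (Y - R) := by
    have := hb2eq ▸ hVb2; exact this
  obtain ⟨c, hc⟩ : ∃ τ : ℝ, W = P + τ • (V - P) := by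
    have := ha1eq ▸ hWa1; exact this
  obtain ⟨e, he⟩ : ∃ τ : ℝ, X = P + τ • (U - P) := by
    have := ha2eq ▸ hXa2; exact this
  obtain ⟨f, hf⟩ : ∃ τ : ℝ, X = Y + τ • (W - Y) := by
    have := hb0eq ▸ hXb0; exact this
  obtain ⟨g, hg⟩ : ∃ τ : ℝ, V = Q + τ • (X - Q) := by
    have := ha3eq ▸ hVa3; exact this
  obtain ⟨w, hw⟩ : ∃ τ : ℝ, U = R + τ • (W - R) := by
    have := hb3eq ▸ hUb3; exact this
  have hY' : Y ∉ lineThrough P Q := ha0eq ▸ hYa0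
  -- canonical coordinates
  have hRc : R = P + r • (Q - P) + (0:ℝ) • (Y - P) := by rw [hr]; module
  have hUc : U = P + (1 - t) • (Q - P) + t • (Y - P) := by rw [ht]; module
  have hVc : V = P + (r - s*r) • (Q - P) + s • (Y - P) := by rw [hs, hr]; module
  have hWc : W = P + (c*(r - s*r)) • (Q - P) + (c*s) • (Y - P) := by
    rw [hc, hVc]; module
  have hXc : X = P + (e*(1 - t)) • (Q - P) + (e*t) • (Y - P) := by
    rw [he, hUc]; module
  have hX2c : X = P + (f*(c*(r - s*r))) • (Q - P) + (1 + f*(c*s - 1)) • (Y - P) := by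
    rw [hf, hWc]; module
  have hV2c : V = P + (1 + g*(e*(1 - t) - 1)) • (Q - P) + (g*(e*t)) • (Y - P) := by
    rw [hg, hXc]; module
  have hU2c : U = P + (r + w*(c*(r - s*r) - r)) • (Q - P) + (w*(c*s)) • (Y - P) := by
    rw [hw, hWc, hr]; module
  -- scalar equations
  obtain ⟨eq1a, eq1b⟩ := indep_coords hPQ hY' (hXc.symm.trans hX2c)
  obtain ⟨eq2a, eq2b⟩ := indep_coords hPQ hY' (hVc.symm.trans hV2c)
  obtain ⟨eq3a, eq3b⟩ := indep_coords hPQ hY' (hUc.symm.trans hU2c)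
  -- scalar disequalities
  have hr0 : r ≠ 0 := by
    intro h0
    have : R = P := by rw [hr, h0, zero_smul, add_zero]
    exact hPR this.symm
  have hr1 : r ≠ 1 := by
    intro h1
    have : R = Q := by rw [hr, h1]; module
    exact hQR this.symm
  have hs0 : s ≠ 0 := by
    intro h0
    have : V = R := by rw [hs, h0, zero_smul, add_zero]
    exact hVR this
  have hs1 : s ≠ 1 := by
    intro h1
    have : V = Y := by rw [hs, h1]; module
    exact hVY this
  -- the Möbius–Kantor contradiction
  have h1' : e*(1 - t)*(c*s - 1) = c*r*(1 - s)*(e*t - 1) := by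
    linear_combination (c*s - 1) * eq1a - c*r*(1 - s) * eq1b
  have h2' : e*(s - t*(1 - s)*(r - 1)) = s := by
    linear_combination (-(e*t)) * eq2a + (e*(1 - t) - 1) * eq2b
  have h3' : c*(t*r*(1 - s) - s*(1 - t - r)) = t*r := by
    linear_combination (-(c*s)) * eq3a + (c*(r - s*r) - r) * eq3b
  have hPfac : (1 - r)*((s^2*(1 - r + r^2) + s*r*(1 - 2*r) + r^2)*t^2
      + (-(s*(r - s*r + 2*s)))*t + s^2) = 0 := by
    linear_combination ((s - t*(1 - s)*(r - 1))*(t*r*(1 - s) - s*(1 - t - r))) * h1'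
      - (s - 2*s*t + s*t^2 - c*s^2 + 2*c*s^2*t - c*s^2*t^2 - r*t + r*t^2 - r*s
        + 2*r*s*t + 2*c*r*s*t - r*s*t^2 - 2*c*r*s*t^2 + c*r*s^2 - 3*c*r*s^2*t
        + 2*c*r*s^2*t^2 - c*r^2*t^2 - c*r^2*s*t + 2*c*r^2*s*t^2 + c*r^2*s^2*t
        - c*r^2*s^2*t^2) * h2'
      - (s^2 - s^2*t + r*t + r*s - 3*r*s*t - r*s^2 + 2*r*s^2*t - r^2*t
        + 2*r^2*s*t - r^2*s^2*t) * h3'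
  have h1r : (1:ℝ) - r ≠ 0 := sub_ne_zero.mpr (Ne.symm hr1)
  have hQ0 : (s^2*(1 - r + r^2) + s*r*(1 - 2*r) + r^2)*t^2
      + (-(s*(r - s*r + 2*s)))*t + s^2 = 0 := by
    rcases mul_eq_zero.mp hPfac with h' | h'
    · exact absurd h' h1r
    · exact h'
  have hsq : (2*(s^2*(1 - r + r^2) + s*r*(1 - 2*r) + r^2)*t
      + (-(s*(r - s*r + 2*s))))^2 + 3*(r*s*(1 - s))^2 = 0 := by
    linear_combination (4*(s^2*(1 - r + r^2) + s*r*(1 - 2*r) + r^2)) * hQ0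
  have hrs : r*s*(1 - s) = 0 := by
    have hz : (r*s*(1 - s))^2 = 0 := by
      nlinarith [sq_nonneg (2*(s^2*(1 - r + r^2) + s*r*(1 - 2*r) + r^2)*t
        + (-(s*(r - s*r + 2*s))))]
    exact pow_eq_zero_iff (two_ne_zero) |>.mp hz
  rcases mul_eq_zero.mp hrs with h' | h'
  · rcases mul_eq_zero.mp h' with h'' | h''
    · exact hr0 h''
    · exact hs0 h''
  · exact hs1 (by linarith [sub_eq_zero.mp h'])
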